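/- arXiv:2410.15088 — 2 statements merged into one kernel-verified Lean document; each statement's English description precedes it below -/
import Mathlib

section
/- Let t ≥ 2 be an integer. For every integer n ≥ 0, the total number of hooks of length 1 in all (t+1)-regular partitions of n is greater than or equal to the total number of hooks of length 1 in all t-regular partitions of n; that is, b_{t+1,1}(n) ≥ b_{t,1}(n). -/
/-- The hook length of the box in row `i`, column `j` (both 0-indexed) of the Young
diagram of the partition whose parts, listed in non-increasing order, are `l`:
1 plus the number of boxes directly to its right plus the number of boxes directly
below it. -/
def hookLength (l : List ℕ) (i j : ℕ) : ℕ :=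
  (l.getD i 0 - j) + ((Finset.Ico (i + 1) l.length).filter (fun i' => j < l.getD i' 0)).card

/-- The number of boxes with hook length exactly `k` in the Young diagram of the
partition whose multiset of parts is `μ`. -/
def hookCount (μ : Multiset ℕ) (k : ℕ) : ℕ :=
  let l := (μ.sort (· ≤ ·)).reverse
  ∑ i ∈ Finset.range l.length,
    ((Finset.range (l.getD i 0)).filter (fun j => hookLength l i j = k)).card

/-- `b t k n`: the total number of boxes with hook length exactly `k`, summed over the
Young diagrams of all `t`-regular partitions of `n` (partitions of `n` none of whose
parts is divisible by `t`). -/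
def regularPartitionHookCount (t k n : ℕ) : ℕ :=
  ∑ p ∈ Finset.univ.filter (fun p : n.Partition => ∀ a ∈ p.parts, ¬ t ∣ a),
    hookCount p.parts k

/-!
A box has hook length 1 exactly when it ends its row and the next row is strictly shorter, so
the hooks of length 1 of a partition are in bijection with its distinct part sizes. Removing one
copy of a part `j` then gives `b_{t,1}(n) = ∑_{1 ≤ j ≤ n, t ∤ j} R_t(n - j)`, where `R_t(m)` counts
the `t`-regular partitions of `m`. By Glaisher's theorem `R_t(m)` counts the partitions of `m` in
which no part repeats `t` times, so `R_t ≤ R_{t+1}`; moreover `R_{t+1}` is monotone (add a part 1).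
Finally, matching each multiple `(t+1)k ≤ n` with `tk ≤ n`, whose term `R_{t+1}(n - tk)` is at
least `R_{t+1}(n - (t+1)k)`, shows that excluding the multiples of `t` from the sum removes at
least as much as excluding those of `t + 1`.
-/

open Finset

lemma card_filter_Ico_add_one (a b : ℕ) (p : ℕ → Prop) [DecidablePred p] :
    #{i ∈ Ico (a + 1) (b + 1) | p i} = #{i ∈ Ico a b | p (i + 1)} := by
  rw [← map_add_right_Ico, filter_map, card_map]
  rfl

lemma hookLength_cons_succ (a : ℕ) (l : List ℕ) (i j : ℕ) :
    hookLength (a :: l) (i + 1) j = hookLength l i j := by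
  simp only [hookLength, List.length_cons, card_filter_Ico_add_one, List.getD_cons_succ]

lemma hookLength_cons_zero_eq_one_iff {a j : ℕ} (l : List ℕ) (hj : j < a) :
    hookLength (a :: l) 0 j = 1 ↔ j + 1 = a ∧ ∀ x ∈ l, x ≤ j := by
  have no_longer_row : #{i ∈ range l.length | j < l.getD i 0} = 0 ↔ ∀ x ∈ l, x ≤ j := by
    rw [card_eq_zero, filter_eq_empty_iff, List.forall_mem_iff_getElem]
    refine forall_congr' fun i => ⟨fun h hi => ?_, fun h hi => ?_⟩ <;> simp_all
  rw [hookLength, List.length_cons, card_filter_Ico_add_one, ← range_eq_Ico]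
  simp only [List.getD_cons_succ, List.getD_cons_zero, ← no_longer_row]
  omega

lemma card_hookLength_cons_zero_eq_one {a : ℕ} {l : List ℕ} (ha : 0 < a) (hle : ∀ x ∈ l, x ≤ a) :
    #{j ∈ range a | hookLength (a :: l) 0 j = 1} = if a ∈ l then 0 else 1 := by
  have mem_iff : ∀ j, j ∈ {j ∈ range a | hookLength (a :: l) 0 j = 1} ↔ j + 1 = a ∧ a ∉ l := by
    intro j
    rw [mem_filter, mem_range]
    constructor
    · rintro ⟨hj, h⟩
      obtain ⟨rfl, hl⟩ := (hookLength_cons_zero_eq_one_iff l hj).1 h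
      exact ⟨rfl, fun hal => by simpa using hl _ hal⟩
    · rintro ⟨rfl, hal⟩
      refine ⟨j.lt_add_one, (hookLength_cons_zero_eq_one_iff l j.lt_add_one).2 ⟨rfl, ?_⟩⟩
      intro x hx
      have := hle x hx
      have : x ≠ j + 1 := by rintro rfl; exact hal hx
      omega
  split_ifs with hal
  · simp [card_eq_zero, eq_empty_iff_forall_notMem, mem_iff, hal]
  · rw [card_eq_one]
    refine ⟨a - 1, ext fun j => ?_⟩
    simp only [mem_iff, hal, mem_singleton, not_false_eq_true, and_true]
    omega

lemma sum_card_hookLength_eq_one {l : List ℕ} (hl : l.Pairwise (· ≥ ·)) (hpos : ∀ x ∈ l, 0 < x) :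
    ∑ i ∈ range l.length, #{j ∈ range (l.getD i 0) | hookLength l i j = 1} = #l.toFinset := by
  induction l with
  | nil => simp
  | cons a l ih =>
    obtain ⟨hle, hl⟩ := List.pairwise_cons.mp hl
    rw [List.length_cons, sum_range_succ']
    simp only [List.getD_cons_succ, hookLength_cons_succ, List.getD_cons_zero]
    rw [ih hl fun x hx => hpos x (List.mem_cons_of_mem a hx),
      card_hookLength_cons_zero_eq_one (hpos a List.mem_cons_self) hle, List.toFinset_cons]
    by_cases ha : a ∈ l
    · simp [ha]
    · simp [ha, card_insert_of_notMem]

lemma hookCount_one {μ : Multiset ℕ} (hμ : ∀ a ∈ μ, 0 < a) : hookCount μ 1 = #μ.toFinset := by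
  rw [hookCount, sum_card_hookLength_eq_one]
  · congr 1
    ext x
    simp
  · exact List.pairwise_reverse.mpr (μ.pairwise_sort _)
  · exact fun x hx => hμ x (by simpa using hx)

namespace Nat.Partition

variable {P : ℕ → Prop} [DecidablePred P]

lemma card_filter_mem_parts_restricted {n j : ℕ} (hj : 1 ≤ j) (hjn : j ≤ n) (hP : P j) :
    #{p ∈ restricted n P | j ∈ p.parts} = #(restricted (n - j) P) := by
  let e := partitionWithPartEquiv hj hjn
  refine card_bij' (fun p hp => e ⟨p, (mem_filter.mp hp).2⟩) (fun q _ => (e.symm q).1)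
    ?_ ?_ (fun p _ => congrArg Subtype.val (e.symm_apply_apply _)) (fun q _ => e.apply_symm_apply q)
  · intro p hp
    simp only [restricted, mem_filter] at hp ⊢
    exact ⟨mem_univ _, fun i hi => hp.1.2 i (by simpa [e] using Multiset.mem_of_mem_erase hi)⟩
  · intro q hq
    simp only [restricted, mem_filter] at hq ⊢
    refine ⟨⟨mem_univ _, fun i hi => ?_⟩, (e.symm q).2⟩
    rw [partitionWithPartEquiv_symm_apply_parts, Multiset.mem_cons] at hi
    rcases hi with rfl | hi
    exacts [hP, hq.2 i hi]

lemma sum_card_toFinset_parts_restricted (n : ℕ) :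
    ∑ p ∈ restricted n P, #p.parts.toFinset = ∑ j ∈ Icc 1 n with P j, #(restricted (n - j) P) := by
  simp only [card_eq_sum_ones]
  rw [sum_comm' (t' := {j ∈ Icc 1 n | P j}) (s' := fun j => {p ∈ restricted n P | j ∈ p.parts})]
  · refine sum_congr rfl fun j hj => ?_
    obtain ⟨hj, hP⟩ := mem_filter.mp hj
    rw [← card_eq_sum_ones, ← card_eq_sum_ones]
    exact card_filter_mem_parts_restricted (mem_Icc.mp hj).1 (mem_Icc.mp hj).2 hP
  · intro p j
    simp only [restricted, mem_filter, mem_univ, true_and, Multiset.mem_toFinset, mem_Icc]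
    exact ⟨fun ⟨hp, hj⟩ => ⟨⟨hp, hj⟩, ⟨p.parts_pos hj, p.le_of_mem_parts hj⟩, hp j hj⟩,
      fun ⟨h, _⟩ => h⟩

lemma monotone_card_restricted (h1 : P 1) : Monotone fun m => #(restricted m P) := by
  refine monotone_nat_of_le_succ fun m => card_le_card_of_injOn
    (fun p => ⟨1 ::ₘ p.parts, by grind [p.parts_pos], by simp [p.parts_sum, add_comm]⟩) ?_ ?_
  · intro p hp
    simp only [restricted, coe_filter, Set.mem_ofPred_eq, mem_univ, true_and] at hp ⊢
    grind
  · intro p _ q _ h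
    exact Partition.ext ((Multiset.cons_inj_right 1).mp (congrArg parts h))

lemma card_restricted_not_dvd_le_succ {t : ℕ} (ht : 0 < t) (m : ℕ) :
    #(restricted m (¬ t ∣ ·)) ≤ #(restricted m (¬ (t + 1) ∣ ·)) := by
  rw [card_restricted_eq_card_countRestricted m ht,
    card_restricted_eq_card_countRestricted m t.succ_pos]
  refine card_le_card fun p hp => ?_
  simp only [countRestricted, mem_filter] at hp ⊢
  exact ⟨hp.1, fun i hi => (hp.2 i hi).trans t.lt_add_one⟩

end Nat.Partition

lemma sum_Icc_filter_dvd {M : Type*} [AddCommMonoid M] (f : ℕ → M) {d : ℕ} (hd : 0 < d) (n : ℕ) :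
    ∑ j ∈ Icc 1 n with d ∣ j, f j = ∑ k ∈ Icc 1 (n / d), f (d * k) := by
  have : {j ∈ Icc 1 n | d ∣ j} = (Icc 1 (n / d)).image (d * ·) := by
    ext j
    simp only [mem_filter, mem_Icc, mem_image, Nat.le_div_iff_mul_le hd]
    constructor
    · rintro ⟨⟨hj, hjn⟩, k, rfl⟩
      exact ⟨k, ⟨Nat.pos_of_mul_pos_left hj, by linarith⟩, rfl⟩
    · rintro ⟨k, ⟨hk, hkn⟩, rfl⟩
      exact ⟨⟨Nat.mul_pos hd hk, by linarith⟩, dvd_mul_right d k⟩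
  rw [this, sum_image fun _ _ _ _ => Nat.eq_of_mul_eq_mul_left hd]

lemma sum_Icc_filter_not_dvd_le_succ {f : ℕ → ℕ} (hf : Antitone f) {t : ℕ} (ht : 0 < t) (n : ℕ) :
    ∑ j ∈ Icc 1 n with ¬ t ∣ j, f j ≤ ∑ j ∈ Icc 1 n with ¬ (t + 1) ∣ j, f j := by
  have split (d : ℕ) : ∑ j ∈ Icc 1 n with ¬ d ∣ j, f j + ∑ j ∈ Icc 1 n with d ∣ j, f j
      = ∑ j ∈ Icc 1 n, f j := by
    rw [add_comm]
    exact sum_filter_add_sum_filter_not _ _ _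
  have multiples : ∑ j ∈ Icc 1 n with (t + 1) ∣ j, f j ≤ ∑ j ∈ Icc 1 n with t ∣ j, f j := by
    rw [sum_Icc_filter_dvd f ht, sum_Icc_filter_dvd f t.succ_pos]
    calc ∑ k ∈ Icc 1 (n / (t + 1)), f ((t + 1) * k)
        ≤ ∑ k ∈ Icc 1 (n / t), f ((t + 1) * k) :=
          sum_le_sum_of_subset (Icc_subset_Icc_right (Nat.div_le_div_left t.le_succ ht))
      _ ≤ ∑ k ∈ Icc 1 (n / t), f (t * k) :=
          sum_le_sum fun k _ => hf (Nat.mul_le_mul_right k t.le_succ)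
  have := split t
  have := split (t + 1)
  omega

open Nat.Partition

/-- For every integer `t ≥ 2` and every `n ≥ 0`, the total number of hooks of length 1
in all `(t+1)`-regular partitions of `n` is at least the total number of hooks of
length 1 in all `t`-regular partitions of `n`: `b_{t+1,1}(n) ≥ b_{t,1}(n)`. -/
theorem hook_length_one_bias (t : ℕ) (ht : 2 ≤ t) (n : ℕ) :
    regularPartitionHookCount t 1 n ≤ regularPartitionHookCount (t + 1) 1 n := by
  have hb (s : ℕ) : regularPartitionHookCount s 1 n
      = ∑ j ∈ Icc 1 n with ¬ s ∣ j, #(restricted (n - j) (¬ s ∣ ·)) := by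
    rw [regularPartitionHookCount, ← sum_card_toFinset_parts_restricted]
    exact sum_congr rfl fun p _ => hookCount_one fun _ => p.parts_pos
  have hR : Monotone fun m => #(restricted m (¬ (t + 1) ∣ ·)) :=
    monotone_card_restricted (Nat.not_dvd_of_pos_of_lt one_pos (by omega))
  rw [hb, hb]
  calc _ ≤ ∑ j ∈ Icc 1 n with ¬ t ∣ j, #(restricted (n - j) (¬ (t + 1) ∣ ·)) :=
        sum_le_sum fun j _ => card_restricted_not_dvd_le_succ (by omega) _
    _ ≤ _ := sum_Icc_filter_not_dvd_le_succ (fun a b hab => hR (Nat.sub_le_sub_left hab n))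
        (by omega) n
end

section
/- Let t ≥ 2 be an integer. For every integer n ≥ 0, the number of (t+1)-regular partitions of n is greater than or equal to the number of t-regular partitions of n; that is, b_{t+1}(n) ≥ b_t(n). -/
/-- `b t n`: the number of `t`-regular partitions of `n`, i.e. partitions of `n` none
of whose parts is divisible by `t` (with `b t 0 = 1`, counting the empty partition). -/
def regularPartitionCount (t n : ℕ) : ℕ :=
  (Finset.univ.filter (fun p : n.Partition => ∀ a ∈ p.parts, ¬ t ∣ a)).card

/-! By Glaisher's theorem, `t`-regular partitions of `n` are equinumerous with partitions of `n`
in which no part occurs `t` or more times; the latter condition weakens as `t` grows. -/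

open Finset Nat.Partition

theorem Nat.Partition.countRestricted_mono (n : ℕ) : Monotone (countRestricted n) :=
  fun _ _ hm => monotone_filter_right _ fun _ _ h i hi => (h i hi).trans_le hm

theorem regularPartitionCount_eq_card_countRestricted {t : ℕ} (ht : 0 < t) (n : ℕ) :
    regularPartitionCount t n = #(countRestricted n t) :=
  card_restricted_eq_card_countRestricted n ht

/-- For every integer `t ≥ 2` and every `n ≥ 0`, the number of `(t+1)`-regular
partitions of `n` is at least the number of `t`-regular partitions of `n`:
`b_{t+1}(n) ≥ b_t(n)`. -/
theorem regular_partition_count_monotone (t : ℕ) (ht : 2 ≤ t) (n : ℕ) :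
    regularPartitionCount t n ≤ regularPartitionCount (t + 1) n := by
  rw [regularPartitionCount_eq_card_countRestricted (by omega),
    regularPartitionCount_eq_card_countRestricted t.succ_pos]
  exact card_le_card (countRestricted_mono n t.le_succ)
end
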